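/- arXiv:1310.2437 — 4 statements merged into one kernel-verified Lean document; each statement's English description precedes it below -/
import Mathlib

section
/- Let X be an unbounded metric space, Y ⊆ X, r ≥ 0, and let q be an ultrafilter on X all of whose members are unbounded. If the r-neighborhood B(Y,r) = ⋃_{y∈Y} B(y,r) belongs to q, then there exists an ultrafilter s on X such that every member of s is unbounded, Y ∈ s, and s is parallel to q (i.e., there exists r' ≥ 0 such that B(S,r') ∈ q for every S ∈ s). -/
open Metric Bornology Set

variable {X : Type*} [MetricSpace X]

/-- `B(A,r) = ⋃_{a∈A} B(a,r)` where `B(a,r)` is the closed ball of radius `r`. -/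
def ballU (A : Set X) (r : ℝ) : Set X := ⋃ a ∈ A, Metric.closedBall a r

/-- `X^#`: the set of ultrafilters on `X` all of whose members are unbounded. -/
def sharp (X : Type*) [MetricSpace X] : Set (Ultrafilter X) :=
  {p | ∀ P ∈ p, ¬ Bornology.IsBounded P}

/-- Parallelity: `p ∥ q` iff there is `r ≥ 0` with `B(Q,r) ∈ p` for every `Q ∈ q`. -/
def Par (p q : Ultrafilter X) : Prop :=
  ∃ r : ℝ, 0 ≤ r ∧ ∀ Q ∈ q, ballU Q r ∈ p

/-- `p̆ = {q ∈ X^# : q ∥ p}`. -/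
def pbreve (p : Ultrafilter X) : Set (Ultrafilter X) :=
  {q | q ∈ sharp X ∧ Par q p}

/-- The `p`-companion `Δ_p(Y) = {q ∈ X^# : Y ∈ q, q ∥ p}`. -/
def Delta (p : Ultrafilter X) (Y : Set X) : Set (Ultrafilter X) :=
  {q | q ∈ sharp X ∧ Y ∈ q ∧ Par q p}

/-- A set `S ⊆ X^#` is invariant if `p ∈ S`, `q ∈ X^#`, `q ∥ p` imply `q ∈ S`. -/
def Invt (S : Set (Ultrafilter X)) : Prop :=
  ∀ p ∈ S, ∀ q, q ∈ sharp X → Par q p → q ∈ S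

/-- `Y` is large if `X = B(Y,r)` for some `r ≥ 0`. -/
def Large (Y : Set X) : Prop := ∃ r : ℝ, 0 ≤ r ∧ ballU Y r = Set.univ

/-- `Y` is thick if for every `r ≥ 0` there is `y ∈ Y` with `B(y,r) ⊆ Y`. -/
def Thick (Y : Set X) : Prop := ∀ r : ℝ, 0 ≤ r → ∃ y ∈ Y, Metric.closedBall y r ⊆ Y

/-- `Y` is prethick if `B(Y,r)` is thick for some `r ≥ 0`. -/
def Prethick (Y : Set X) : Prop := ∃ r : ℝ, 0 ≤ r ∧ Thick (ballU Y r)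

/-- `Y` is small if `(X∖Y) ∩ L` is large for every large `L`. -/
def SmallSet (Y : Set X) : Prop := ∀ L : Set X, Large L → Large (Yᶜ ∩ L)

/-- `Y` is thin if for each `r ≥ 0` there is a bounded `V` with
`B(y,r) ∩ Y = {y}` for all `y ∈ Y∖V`. -/
def Thin (Y : Set X) : Prop :=
  ∀ r : ℝ, 0 ≤ r → ∃ V : Set X, Bornology.IsBounded V ∧
    ∀ y ∈ Y \ V, Metric.closedBall y r ∩ Y = {y}

/-- `Y` is `n`-thin if for each `r ≥ 0` there is a bounded `V` with
`|B(y,r) ∩ Y| ≤ n` for all `y ∈ Y∖V`. -/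
def NThin (n : ℕ) (Y : Set X) : Prop :=
  ∀ r : ℝ, 0 ≤ r → ∃ V : Set X, Bornology.IsBounded V ∧
    ∀ y ∈ Y \ V, (Metric.closedBall y r ∩ Y).encard ≤ n

/-- `M` is a minimal nonempty closed invariant subset of `X^#`
(closures/closedness taken in the Stone topology on ultrafilters). -/
def MinCI (M : Set (Ultrafilter X)) : Prop :=
  M ⊆ sharp X ∧ M.Nonempty ∧ IsClosed M ∧ Invt M ∧
    ∀ S ⊆ M, S.Nonempty → IsClosed S → Invt S → S = M

/-! Push `q` forward along a map sending each point of `B(Y,r)` to a point of `Y` at distance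
at most `r`. The image ultrafilter contains `Y`, and every `S` in it satisfies `B(S,r) ∈ q`;
this is parallelity, and it also forces `S` to be unbounded, since `q ∈ X^#`. -/

lemma mem_ballU_iff {A : Set X} {r : ℝ} {x : X} : x ∈ ballU A r ↔ ∃ a ∈ A, dist x a ≤ r := by
  simp [ballU]

lemma ballU_subset_cthickening (A : Set X) (r : ℝ) : ballU A r ⊆ cthickening r A := by
  intro x hx
  obtain ⟨a, ha, hxa⟩ := mem_ballU_iff.1 hx
  exact mem_cthickening_of_dist_le x a r A ha hxa

lemma Bornology.IsBounded.ballU {A : Set X} (hA : IsBounded A) (r : ℝ) :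
    IsBounded (ballU A r) :=
  hA.cthickening.subset (ballU_subset_cthickening A r)

lemma exists_forall_mem_ballU_dist_le (Y : Set X) (r : ℝ) :
    ∃ f : X → X, ∀ x ∈ ballU Y r, f x ∈ Y ∧ dist x (f x) ≤ r := by
  have : ∀ x, ∃ y, x ∈ ballU Y r → y ∈ Y ∧ dist x y ≤ r := fun x => by
    by_cases hx : x ∈ ballU Y r
    · obtain ⟨y, hy, hxy⟩ := mem_ballU_iff.1 hx
      exact ⟨y, fun _ => ⟨hy, hxy⟩⟩
    · exact ⟨x, fun h => absurd h hx⟩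
  choose f hf using this
  exact ⟨f, hf⟩

section map

variable {f : X → X} {r : ℝ}

lemma ballU_mem_of_mem_map {l : Filter X} (hf : ∀ᶠ x in l, dist x (f x) ≤ r) {S : Set X}
    (hS : S ∈ l.map f) : ballU S r ∈ l := by
  filter_upwards [hf, hS] with x hx hxS
  exact mem_ballU_iff.2 ⟨f x, hxS, hx⟩

lemma map_mem_sharp {q : Ultrafilter X} (hq : q ∈ sharp X)
    (hf : ∀ᶠ x in (q : Filter X), dist x (f x) ≤ r) : q.map f ∈ sharp X :=
  fun _ hS hSb => hq _ (ballU_mem_of_mem_map hf hS) (hSb.ballU r)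

lemma par_map_right {q : Ultrafilter X} (hf : ∀ᶠ x in (q : Filter X), dist x (f x) ≤ r) :
    Par q (q.map f) := by
  obtain ⟨x, hx⟩ := hf.exists
  exact ⟨r, dist_nonneg.trans hx, fun _ hS => ballU_mem_of_mem_map hf hS⟩

end map

theorem stmt0_general
    (Y : Set X) (r : ℝ) (q : Ultrafilter X) (hq : q ∈ sharp X)
    (hYq : ballU Y r ∈ q) :
    ∃ s : Ultrafilter X, s ∈ sharp X ∧ Y ∈ s ∧
      ∃ r' : ℝ, 0 ≤ r' ∧ ∀ S ∈ s, ballU S r' ∈ q := by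
  obtain ⟨f, hf⟩ := exists_forall_mem_ballU_dist_le Y r
  have hdist : ∀ᶠ x in (q : Filter X), dist x (f x) ≤ r :=
    Filter.mem_of_superset hYq fun x hx => (hf x hx).2
  have hY : Y ∈ q.map f :=
    Ultrafilter.mem_map.2 (Filter.mem_of_superset hYq fun x hx => (hf x hx).1)
  exact ⟨q.map f, map_mem_sharp hq hdist, hY, par_map_right hdist⟩

theorem stmt0 (hX : ¬ Bornology.IsBounded (Set.univ : Set X))
    (Y : Set X) (r : ℝ) (hr : 0 ≤ r) (q : Ultrafilter X) (hq : q ∈ sharp X)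
    (hYq : ballU Y r ∈ q) :
    ∃ s : Ultrafilter X, s ∈ sharp X ∧ Y ∈ s ∧
      ∃ r' : ℝ, 0 ≤ r' ∧ ∀ S ∈ s, ballU S r' ∈ q :=
  stmt0_general Y r q hq hYq
end

section
/- The parallelity relation ∥ on X^# is an equivalence relation: for p, q, s ∈ X^#, p ∥ p; if p ∥ q then q ∥ p; and if p ∥ q and q ∥ s then p ∥ s. -/
open Metric Bornology Set

variable {X : Type*} [MetricSpace X]

lemma subset_ballU {A : Set X} {r : ℝ} (hr : 0 ≤ r) : A ⊆ ballU A r := fun a ha =>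
  mem_biUnion ha (mem_closedBall_self hr)

lemma ballU_ballU_subset {A : Set X} {r s : ℝ} : ballU (ballU A s) r ⊆ ballU A (r + s) := by
  intro x hx
  obtain ⟨b, hb, hxb⟩ := mem_iUnion₂.1 hx
  obtain ⟨a, ha, hba⟩ := mem_iUnion₂.1 hb
  exact mem_biUnion ha (mem_closedBall.2 <|
    (dist_triangle x b a).trans (add_le_add (mem_closedBall.1 hxb) (mem_closedBall.1 hba)))

lemma disjoint_ballU_compl_ballU (A : Set X) (r : ℝ) : Disjoint (ballU (ballU A r)ᶜ r) A := by
  refine Set.disjoint_left.2 fun x hx hxA => ?_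
  obtain ⟨c, hc, hxc⟩ := mem_iUnion₂.1 hx
  exact hc (mem_biUnion hxA (mem_closedBall_comm.1 hxc))

lemma Par.refl (p : Ultrafilter X) : Par p p :=
  ⟨0, le_rfl, fun _ hP => Filter.mem_of_superset hP (subset_ballU le_rfl)⟩

lemma Par.symm {p q : Ultrafilter X} (h : Par p q) : Par q p := by
  obtain ⟨r, hr, hB⟩ := h
  refine ⟨r, hr, fun P hP => ?_⟩
  by_contra hPq
  have hPp : ballU (ballU P r)ᶜ r ∈ p := hB _ (Ultrafilter.compl_mem_iff_notMem.2 hPq)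
  exact Ultrafilter.empty_notMem <|
    (disjoint_ballU_compl_ballU P r).inter_eq ▸ Filter.inter_mem hPp hP

lemma Par.trans {p q s : Ultrafilter X} (hpq : Par p q) (hqs : Par q s) : Par p s := by
  obtain ⟨r₁, hr₁, h₁⟩ := hpq
  obtain ⟨r₂, hr₂, h₂⟩ := hqs
  exact ⟨r₁ + r₂, add_nonneg hr₁ hr₂, fun S hS =>
    Filter.mem_of_superset (h₁ _ (h₂ _ hS)) ballU_ballU_subset⟩

theorem stmt1_general :
    (∀ p ∈ sharp X, Par p p) ∧
    (∀ p ∈ sharp X, ∀ q ∈ sharp X, Par p q → Par q p) ∧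
    (∀ p ∈ sharp X, ∀ q ∈ sharp X, ∀ s ∈ sharp X, Par p q → Par q s → Par p s) :=
  ⟨fun p _ => Par.refl p, fun _ _ _ _ h => h.symm, fun _ _ _ _ _ _ hpq hqs => hpq.trans hqs⟩

theorem stmt1 (hX : ¬ Bornology.IsBounded (Set.univ : Set X)) :
    (∀ p ∈ sharp X, Par p p) ∧
    (∀ p ∈ sharp X, ∀ q ∈ sharp X, Par p q → Par q p) ∧
    (∀ p ∈ sharp X, ∀ q ∈ sharp X, ∀ s ∈ sharp X, Par p q → Par q s → Par p s) :=
  stmt1_general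
end

section
/- The family of all small subsets of an unbounded metric space X is an ideal in the Boolean algebra of all subsets of X: subsets of small sets are small and the union of two small sets is small. -/
open Metric Bornology Set

variable {X : Type*} [MetricSpace X]

theorem Large.mono {A B : Set X} (hA : Large A) (hAB : A ⊆ B) : Large B := by
  obtain ⟨r, hr, hball⟩ := hA
  refine ⟨r, hr, eq_univ_of_univ_subset ?_⟩
  rw [← hball]
  exact biUnion_subset_biUnion_left hAB

theorem SmallSet.mono {Y Z : Set X} (hY : SmallSet Y) (hZY : Z ⊆ Y) : SmallSet Z :=
  fun L hL => (hY L hL).mono (inter_subset_inter_left L (compl_subset_compl.mpr hZY))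

theorem SmallSet.union {Y Z : Set X} (hY : SmallSet Y) (hZ : SmallSet Z) :
    SmallSet (Y ∪ Z) := by
  intro L hL
  have hYZ : Zᶜ ∩ (Yᶜ ∩ L) = (Y ∪ Z)ᶜ ∩ L := by
    rw [compl_union, inter_assoc]; exact inter_left_comm _ _ _
  exact hYZ ▸ hZ _ (hY L hL)

theorem stmt12_general :
    (∀ Y Z : Set X, SmallSet Y → Z ⊆ Y → SmallSet Z) ∧
    (∀ Y Z : Set X, SmallSet Y → SmallSet Z → SmallSet (Y ∪ Z)) :=
  ⟨fun _ _ hY hZY => hY.mono hZY, fun _ _ hY hZ => hY.union hZ⟩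

theorem stmt12 (hX : ¬ Bornology.IsBounded (Set.univ : Set X)) :
    (∀ Y Z : Set X, SmallSet Y → Z ⊆ Y → SmallSet Z) ∧
    (∀ Y Z : Set X, SmallSet Y → SmallSet Z → SmallSet (Y ∪ Z)) :=
  stmt12_general
end

section
/- Let Y be a subset of X and suppose there exist two distinct parallel ultrafilters p, q in X^# both containing Y. Then Y is not thin. -/
open Metric Bornology Set

variable {X : Type*} [MetricSpace X]

/-! If `p ∥ q` with radius `r` and `Y` is thin, then outside a bounded set `V` the closed
`r`-balls meet `Y` only in their centres, so `B(Q, r) ∩ Y ⊆ Q` whenever `Q ⊆ Y \ V`. As `p`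
contains `B(Q, r)` and `Y`, every `A ∈ q` lies in `p` (take `Q = Y \ V ∩ A ∈ q`), hence `p = q`. -/

theorem compl_mem_of_mem_sharp {q : Ultrafilter X} (hq : q ∈ sharp X) {V : Set X}
    (hV : IsBounded V) : Vᶜ ∈ q :=
  Ultrafilter.compl_mem_iff_notMem.2 fun hVq => hq V hVq hV

theorem ballU_inter_subset_of_closedBall_inter_eq {Y V Q : Set X} {r : ℝ}
    (hsep : ∀ y ∈ Y \ V, closedBall y r ∩ Y = {y}) (hQ : Q ⊆ Y \ V) :
    ballU Q r ∩ Y ⊆ Q := by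
  rintro x ⟨hxB, hxY⟩
  simp only [ballU, mem_iUnion, exists_prop] at hxB
  obtain ⟨y, hyQ, hxy⟩ := hxB
  have hx : x ∈ ({y} : Set X) := hsep y (hQ hyQ) ▸ ⟨hxy, hxY⟩
  exact (mem_singleton_iff.1 hx) ▸ hyQ

theorem Thin.eq_of_par {Y : Set X} (hY : Thin Y) {p q : Ultrafilter X} (hq : q ∈ sharp X)
    (hpar : Par p q) (hYp : Y ∈ p) (hYq : Y ∈ q) : p = q := by
  obtain ⟨r, hr, hball⟩ := hpar
  obtain ⟨V, hV, hsep⟩ := hY r hr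
  refine Ultrafilter.eq_of_le fun A hA => ?_
  have hQ : Y \ V ∩ A ∈ q :=
    Filter.inter_mem (Filter.sdiff_mem hYq (compl_mem_of_mem_sharp hq hV)) hA
  have hsub : ballU (Y \ V ∩ A) r ∩ Y ⊆ A := fun x hx =>
    (ballU_inter_subset_of_closedBall_inter_eq hsep inter_subset_left hx).2
  exact Filter.mem_of_superset (Filter.inter_mem (hball _ hQ) hYp) hsub

theorem stmt18_general (Y : Set X)
    (p q : Ultrafilter X) (hq : q ∈ sharp X)
    (hne : p ≠ q) (hpar : Par p q) (hYp : Y ∈ p) (hYq : Y ∈ q) :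
    ¬ Thin Y :=
  fun hY => hne (hY.eq_of_par hq hpar hYp hYq)

theorem stmt18 (hX : ¬ Bornology.IsBounded (Set.univ : Set X)) (Y : Set X)
    (p q : Ultrafilter X) (hp : p ∈ sharp X) (hq : q ∈ sharp X)
    (hne : p ≠ q) (hpar : Par p q) (hYp : Y ∈ p) (hYq : Y ∈ q) :
    ¬ Thin Y :=
  stmt18_general Y p q hq hne hpar hYp hYq
end
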